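/- Over an algebraically closed field of characteristic zero, a triangular system p_1, ..., p_d has exactly n_1 ⋯ n_d distinct common zeros if and only if the quotient ring K[x_1, ..., x_d]/(p_1, ..., p_d) is reduced (has no nonzero nilpotents). -/

import Mathlib

open MvPolynomial

/-- A triangular system: `p k` is monic of degree `n k` in the variable `x k`,
with all other terms involving only variables `x j`, `j ≤ k`, and of degree
less than `n k` in `x k`. -/
def IsTriangular {K : Type*} [CommRing K] {d : ℕ} (n : Fin d → ℕ)
    (p : Fin d → MvPolynomial (Fin d) K) : Prop :=
  ∀ k : Fin d, ∃ q : MvPolynomial (Fin d) K,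
    (∀ j ∈ q.vars, j ≤ k) ∧ q.degreeOf k < n k ∧ p k = X k ^ n k + q

/-- The set of common zeros of the system in `K^d`. -/
def zeroSet {K : Type*} [CommRing K] {d : ℕ}
    (p : Fin d → MvPolynomial (Fin d) K) : Set (Fin d → K) :=
  {a : Fin d → K | ∀ k, eval a (p k) = 0}

/-! Singling out the last variable, `K[x₁,…,x_d]/(p₁,…,p_d)` is obtained from
`B = K[x₁,…,x_{d-1}]/(p₁,…,p_{d-1})` by adjoining a root of the image of `p_d` in `B[x_d]`,
a monic polynomial of degree `n_d`; by induction the quotient `A` has dimension `∏ n_k`.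
Common zeros are the `K`-algebra maps `A → K`. They factor through `A / nil(A)`, which, being
reduced and finite over the algebraically closed `K`, is a product of copies of `K`, one per
maximal ideal; so the number of zeros is `dim (A / nil(A))`, and it equals `dim A` exactly when the
nilradical vanishes. -/

open scoped Polynomial

namespace MvPolynomial

variable (R : Type*) [CommRing R] (d : ℕ)

noncomputable def finSuccLastEquiv :
    MvPolynomial (Fin (d + 1)) R ≃ₐ[R] (MvPolynomial (Fin d) R)[X] :=
  (renameEquiv R finSuccEquivLast).trans (optionEquivLeft R (Fin d))

variable {R d}

theorem finSuccLastEquiv_X_last : finSuccLastEquiv R d (X (Fin.last d)) = Polynomial.X := by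
  simp [finSuccLastEquiv, optionEquivLeft_X_none]

theorem finSuccLastEquiv_rename_castSucc (x : MvPolynomial (Fin d) R) :
    finSuccLastEquiv R d (rename Fin.castSucc x) = Polynomial.C x := by
  have : ((finSuccLastEquiv R d).toAlgHom.comp (rename Fin.castSucc)) = Polynomial.CAlgHom := by
    ext i : 2
    simp [finSuccLastEquiv, optionEquivLeft_X_some]
  exact congr($this x)

theorem natDegree_finSuccLastEquiv (x : MvPolynomial (Fin (d + 1)) R) :
    (finSuccLastEquiv R d x).natDegree = x.degreeOf (Fin.last d) := by
  rw [finSuccLastEquiv, AlgEquiv.trans_apply, natDegree_optionEquivLeft, renameEquiv_apply,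
    ← finSuccEquivLast_last, degreeOf_rename_of_injective finSuccEquivLast.injective]

end MvPolynomial

namespace Polynomial

variable {R : Type*} [CommRing R]

noncomputable def quotientSpanSupMapCAlgEquiv (f : R[X]) (J : Ideal R) :
    (R[X] ⧸ Ideal.span {f} ⊔ J.map C) ≃ₐ[R] AdjoinRoot (f.map (Ideal.Quotient.mk J)) :=
  (DoubleQuot.quotQuotEquivQuotSupₐ R _ _).symm.trans <|
    (Ideal.quotientEquivAlgOfEq R (Ideal.map_map C (Ideal.Quotient.mk (Ideal.span {f})))).trans
      (AdjoinRoot.quotEquivQuotMap f J)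

end Polynomial

theorem AdjoinRoot.finite_and_finrank_of_monic {K B : Type*} [Field K] [CommRing B] [Algebra K B]
    [Module.Finite K B] {g : B[X]} (hg : g.Monic) :
    Module.Finite K (AdjoinRoot g) ∧
      Module.finrank K (AdjoinRoot g) = Module.finrank K B * g.natDegree := by
  have := hg.finite_adjoinRoot
  have := hg.free_adjoinRoot
  refine ⟨.trans B _, ?_⟩
  cases subsingleton_or_nontrivial B
  · have := Module.subsingleton B (AdjoinRoot g)
    simp [Module.finrank_zero_of_subsingleton]
  · rw [← Module.finrank_mul_finrank K B, (AdjoinRoot.isAdjoinRootMonic g hg).finrank]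

section Triangular

variable {R : Type*} [CommRing R] {d : ℕ}

theorem IsTriangular.pos {n : Fin d → ℕ} {p : Fin d → MvPolynomial (Fin d) R}
    (h : IsTriangular n p) (k : Fin d) : 0 < n k :=
  let ⟨_, _, hdeg, _⟩ := h k
  Nat.zero_lt_of_lt hdeg

theorem IsTriangular.exists_rename_castSucc {n : Fin (d + 1) → ℕ}
    {p : Fin (d + 1) → MvPolynomial (Fin (d + 1)) R} (h : IsTriangular n p) :
    ∃ r : Fin d → MvPolynomial (Fin d) R,
      IsTriangular (fun i ↦ n i.castSucc) r ∧ ∀ i, rename Fin.castSucc (r i) = p i.castSucc := by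
  choose q hvars hdeg hp using h
  have hrange (i : Fin d) : ↑(q i.castSucc).vars ⊆ Set.range (Fin.castSucc (n := d)) :=
    fun j hj ↦ Fin.range_castSucc ▸ (hvars _ j hj).trans_lt (Fin.castSucc_lt_last i)
  choose q' hq' using fun i ↦
    exists_rename_eq_of_vars_subset_range _ _ (Fin.castSucc_injective d) (hrange i)
  have hdegOf (i j : Fin d) : (q' i).degreeOf j = (q i.castSucc).degreeOf j.castSucc := by
    rw [← hq', degreeOf_rename_of_injective (Fin.castSucc_injective d)]
  refine ⟨fun i ↦ X i ^ n i.castSucc + q' i, fun i ↦ ⟨q' i, fun j hj ↦ ?_, ?_, rfl⟩, fun i ↦ ?_⟩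
  · rw [mem_vars_iff_degreeOf_ne_zero, hdegOf, ← mem_vars_iff_degreeOf_ne_zero] at hj
    exact Fin.castSucc_le_castSucc_iff.mp (hvars _ _ hj)
  · exact hdegOf i i ▸ hdeg i.castSucc
  · rw [map_add, map_pow, rename_X, hq', hp]

theorem IsTriangular.monic_finSuccLastEquiv [Nontrivial R] {n : Fin (d + 1) → ℕ}
    {p : Fin (d + 1) → MvPolynomial (Fin (d + 1)) R} (h : IsTriangular n p) :
    (finSuccLastEquiv R d (p (Fin.last d))).Monic ∧
      (finSuccLastEquiv R d (p (Fin.last d))).natDegree = n (Fin.last d) := by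
  obtain ⟨q, -, hdeg, hp⟩ := h (Fin.last d)
  have hq : (finSuccLastEquiv R d q).degree < n (Fin.last d) :=
    Polynomial.degree_le_natDegree.trans_lt
      (by exact_mod_cast (natDegree_finSuccLastEquiv q).trans_lt hdeg)
  rw [hp, map_add, map_pow, finSuccLastEquiv_X_last]
  refine ⟨Polynomial.monic_X_pow_add hq, ?_⟩
  rw [Polynomial.natDegree_add_eq_left_of_degree_lt (by rwa [Polynomial.degree_X_pow]),
    Polynomial.natDegree_X_pow]

theorem map_finSuccLastEquiv_span_range (p : Fin (d + 1) → MvPolynomial (Fin (d + 1)) R)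
    (r : Fin d → MvPolynomial (Fin d) R) (hr : ∀ i, rename Fin.castSucc (r i) = p i.castSucc) :
    (Ideal.span (Set.range p)).map (finSuccLastEquiv R d) =
      Ideal.span {finSuccLastEquiv R d (p (Fin.last d))} ⊔
        (Ideal.span (Set.range r)).map Polynomial.C := by
  have hinit : ⇑(finSuccLastEquiv R d) ∘ Fin.init p = Polynomial.C ∘ r :=
    funext fun i ↦ by simp [Fin.init, ← hr, finSuccLastEquiv_rename_castSucc]
  rw [← Fin.snoc_init_self p, Fin.range_snoc, Ideal.span_insert, Ideal.map_sup, Ideal.map_span,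
    Ideal.map_span, Ideal.map_span, Set.image_singleton, ← Set.range_comp, ← Set.range_comp,
    hinit, Fin.snoc_last]

end Triangular

theorem IsTriangular.finite_and_finrank_quotient {K : Type*} [Field K] {d : ℕ} {n : Fin d → ℕ}
    {p : Fin d → MvPolynomial (Fin d) K} (h : IsTriangular n p) :
    Module.Finite K (MvPolynomial (Fin d) K ⧸ Ideal.span (Set.range p)) ∧
      Module.finrank K (MvPolynomial (Fin d) K ⧸ Ideal.span (Set.range p)) = ∏ k, n k := by
  induction d with
  | zero =>
    let e : (MvPolynomial (Fin 0) K ⧸ Ideal.span (Set.range p)) ≃ₐ[K] K :=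
      (Ideal.quotientEquivAlgOfEq K (by simp)).trans
        ((AlgEquiv.quotientBot K _).trans (isEmptyAlgEquiv K (Fin 0)))
    exact ⟨.equiv e.symm.toLinearEquiv, by simp [e.toLinearEquiv.finrank_eq]⟩
  | succ d ih =>
    obtain ⟨r, hr, hrp⟩ := h.exists_rename_castSucc
    obtain ⟨hmonic, hdeg⟩ := h.monic_finSuccLastEquiv
    obtain ⟨_, hrank⟩ := ih hr
    let e := (Ideal.quotientEquivAlg _ _ (finSuccLastEquiv K d) rfl).trans <|
      (Ideal.quotientEquivAlgOfEq K (map_finSuccLastEquiv_span_range p r hrp)).trans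
        ((Polynomial.quotientSpanSupMapCAlgEquiv _ _).restrictScalars K)
    obtain ⟨_, hrank'⟩ := AdjoinRoot.finite_and_finrank_of_monic (K := K)
      (hmonic.map (Ideal.Quotient.mk (Ideal.span (Set.range r))))
    have : Nontrivial (MvPolynomial (Fin d) K ⧸ Ideal.span (Set.range r)) :=
      Module.nontrivial_of_finrank_pos (R := K) (hrank ▸ Finset.prod_pos fun k _ ↦ hr.pos k)
    refine ⟨.equiv e.symm.toLinearEquiv, ?_⟩
    rw [e.toLinearEquiv.finrank_eq, hrank', hrank, hmonic.natDegree_map, hdeg,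
      Fin.prod_univ_castSucc]

section ZeroSet

variable {K : Type*} [CommRing K] {d : ℕ}

noncomputable def zeroSetEquivAlgHom (p : Fin d → MvPolynomial (Fin d) K) :
    zeroSet p ≃ (MvPolynomial (Fin d) K ⧸ Ideal.span (Set.range p) →ₐ[K] K) where
  toFun a := Ideal.Quotient.liftₐ _ (aeval a.1) fun _ hq ↦
    Ideal.span_le (I := RingHom.ker (aeval a.1)).mpr (by rintro _ ⟨k, rfl⟩; exact a.2 k) hq
  invFun φ := ⟨fun k ↦ φ (Ideal.Quotient.mk _ (X k)), fun k ↦ by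
    have h := congr($(aeval_unique (φ.comp (Ideal.Quotient.mkₐ K _))) (p k))
    rw [AlgHom.comp_apply, Ideal.Quotient.mkₐ_eq_mk, Ideal.Quotient.eq_zero_iff_mem.mpr
      (Ideal.subset_span (Set.mem_range_self k)), map_zero] at h
    exact h.symm⟩
  left_inv a := by ext k; exact aeval_X _ k
  right_inv φ := Ideal.Quotient.algHom_ext K (MvPolynomial.algHom_ext fun k ↦ aeval_X _ k)

end ZeroSet

section AlgebraicSide

variable {K A : Type*} [Field K] [CommRing A] [Algebra K A]

noncomputable def algHomQuotientNilradicalEquiv {B : Type*} [CommRing B] [Algebra K B]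
    [IsReduced B] : (A ⧸ nilradical A →ₐ[K] B) ≃ (A →ₐ[K] B) where
  toFun ψ := ψ.comp (Ideal.Quotient.mkₐ K (nilradical A))
  invFun φ := Ideal.Quotient.liftₐ (nilradical A) φ fun _ ha ↦
    ((mem_nilradical.mp ha).map φ).eq_zero
  left_inv ψ := Ideal.Quotient.algHom_ext K (by ext; rfl)
  right_inv φ := by ext; rfl

theorem Ideal.finrank_quotient_eq_finrank_iff [Module.Finite K A] (I : Ideal A) :
    Module.finrank K (A ⧸ I) = Module.finrank K A ↔ I = ⊥ := by
  constructor
  · intro h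
    have hinj := (LinearMap.injective_iff_surjective_of_finrank_eq_finrank h.symm
      (f := (Ideal.Quotient.mkₐ K I).toLinearMap)).mpr Ideal.Quotient.mk_surjective
    rw [← Ideal.mk_ker (I := I)]
    exact (RingHom.injective_iff_ker_eq_bot _).mp hinj
  · rintro rfl
    exact (AlgEquiv.quotientBot K A).toLinearEquiv.finrank_eq

variable [IsAlgClosed K] [Module.Finite K A]

noncomputable def quotientMaximalAlgEquiv (m : Ideal A) [m.IsMaximal] : (A ⧸ m) ≃ₐ[K] K :=
  (AlgEquiv.ofBijective (Algebra.ofId K (A ⧸ m))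
    IsAlgClosed.algebraMap_bijective_of_isIntegral).symm

noncomputable def algEquivPiMaximalSpectrum [IsReduced A] : A ≃ₐ[K] (MaximalSpectrum A → K) :=
  have : IsArtinianRing A := isArtinian_of_tower K inferInstance
  ((IsArtinianRing.equivPi A).restrictScalars K).trans
    (AlgEquiv.piCongrRight fun m ↦ quotientMaximalAlgEquiv m.asIdeal)

theorem finrank_eq_card_algHom [IsReduced A] : Module.finrank K A = Nat.card (A →ₐ[K] K) := by
  have : IsArtinianRing A := isArtinian_of_tower K inferInstance
  have : Fintype (MaximalSpectrum A) := Fintype.ofFinite _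
  have : Algebra.IsFiniteSplit K A := .of_algEquiv (algEquivPiMaximalSpectrum (K := K)).symm
  rw [(algEquivPiMaximalSpectrum (K := K)).toLinearEquiv.finrank_eq,
    Module.finrank_fintype_fun_eq_card, ← Nat.card_eq_fintype_card,
    Nat.card_congr (Algebra.IsFiniteSplit.algHomEquivPrimeSpectrum K A),
    Nat.card_congr IsArtinianRing.primeSpectrumEquivMaximalSpectrum]

theorem card_algHom_eq_finrank_quotient_nilradical :
    Nat.card (A →ₐ[K] K) = Module.finrank K (A ⧸ nilradical A) := by
  have : IsReduced (A ⧸ nilradical A) :=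
    (Ideal.isRadical_iff_quotient_reduced _).mp (Ideal.radical_isRadical 0)
  rw [finrank_eq_card_algHom, Nat.card_congr algHomQuotientNilradicalEquiv]

end AlgebraicSide

theorem stmt_18_general {K : Type*} [Field K] [IsAlgClosed K] {d : ℕ}
    (n : Fin d → ℕ) (p : Fin d → MvPolynomial (Fin d) K)
    (htri : IsTriangular n p) :
    (zeroSet p).ncard = ∏ k, n k ↔
      IsReduced (MvPolynomial (Fin d) K ⧸ Ideal.span (Set.range p)) := by
  obtain ⟨_, hrank⟩ := htri.finite_and_finrank_quotient
  rw [← Nat.card_coe_set_eq, Nat.card_congr (zeroSetEquivAlgHom p),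
    card_algHom_eq_finrank_quotient_nilradical, ← hrank, Ideal.finrank_quotient_eq_finrank_iff,
    nilradical_eq_bot_iff]

theorem stmt_18 {K : Type*} [Field K] [IsAlgClosed K] [CharZero K] {d : ℕ}
    (n : Fin d → ℕ) (p : Fin d → MvPolynomial (Fin d) K)
    (htri : IsTriangular n p) :
    (zeroSet p).ncard = ∏ k, n k ↔
      IsReduced (MvPolynomial (Fin d) K ⧸ Ideal.span (Set.range p)) :=
  stmt_18_general n p htri
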